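/- arXiv:1003.2493 — 8 statements merged into one kernel-verified Lean document; each statement's English description precedes it below -/
import Mathlib

section
/- Let Ξ be a finite set of distinct points in F², and for each horizontal line through Ξ let H_j(Ξ) be the set of abscissae of points of Ξ on that line, ordered so that |H₀(Ξ)| ≥ |H₁(Ξ)| ≥ ⋯ ≥ |H_ν(Ξ)|. If H₀(Ξ) ⊇ H₁(Ξ) ⊇ ⋯ ⊇ H_ν(Ξ), then Ξ is a cartesian set, i.e., S_x(Ξ) = S_y(Ξ). -/
open Finset

lemma downclosed_iff {n : ℕ} (S : Finset (Fin n))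
    (hS : ∀ j k : Fin n, j ≤ k → k ∈ S → j ∈ S) (j : Fin n) :
    j ∈ S ↔ (j : ℕ) < S.card := by
  constructor
  · intro hj
    have h1 : Finset.Iic j ⊆ S := fun k hk => hS k j (Finset.mem_Iic.mp hk) hj
    have h2 := Finset.card_le_card h1
    have h3 : (Finset.Iic j).card = (j : ℕ) + 1 := by
      simp [Fin.card_Iic]
    omega
  · intro hj
    by_contra hjS
    have h1 : S ⊆ Finset.Iio j := by
      intro k hk
      rw [Finset.mem_Iio]
      rcases lt_or_ge k j with h | h
      · exact h
      · exact absurd (hS j k h hk) hjS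
    have h2 := Finset.card_le_card h1
    have h3 : (Finset.Iio j).card = (j : ℕ) := by simp [Fin.card_Iio]
    omega

/-- If the abscissa sets of the horizontal layers of a finite point set `Ξ` (sorted by weakly
decreasing cardinality) form a descending chain `H₀ ⊇ H₁ ⊇ ⋯ ⊇ H_ν`, then `Ξ` is cartesian,
i.e. `S_x(Ξ) = S_y(Ξ)`. -/
theorem stmt_5 {F : Type*} [Field F] [DecidableEq F]
    (Ξ : Finset (F × F)) (N M : ℕ)
    (ybar : Fin N → F) (xbar : Fin M → F)
    (hyinj : Function.Injective ybar) (hxinj : Function.Injective xbar)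
    (hyim : Ξ.image Prod.snd = Finset.univ.image ybar)
    (hxim : Ξ.image Prod.fst = Finset.univ.image xbar)
    (H : Fin N → Finset F) (V : Fin M → Finset F)
    (hH : ∀ j, H j = (Ξ.filter (fun p => p.2 = ybar j)).image Prod.fst)
    (hV : ∀ i, V i = (Ξ.filter (fun p => p.1 = xbar i)).image Prod.snd)
    (hHmono : ∀ j k : Fin N, j ≤ k → (H k).card ≤ (H j).card)
    (hVmono : ∀ i k : Fin M, i ≤ k → (V k).card ≤ (V i).card)
    (hchain : ∀ j k : Fin N, j ≤ k → H k ⊆ H j) :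
    {p : ℕ × ℕ | ∃ hj : p.2 < N, p.1 < (H ⟨p.2, hj⟩).card} =
      {p : ℕ × ℕ | ∃ hi : p.1 < M, p.2 < (V ⟨p.1, hi⟩).card} := by
  -- V i as image of a set of indices j
  have hVeq : ∀ i : Fin M,
      V i = (Finset.univ.filter (fun j : Fin N => xbar i ∈ H j)).image ybar := by
    intro i
    ext y
    rw [hV]
    simp only [Finset.mem_image, Finset.mem_filter, Finset.mem_univ, true_and]
    constructor
    · rintro ⟨p, hp, rfl⟩
      have hy : p.2 ∈ Ξ.image Prod.snd := Finset.mem_image_of_mem _ hp.1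
      rw [hyim] at hy
      simp only [Finset.mem_image, Finset.mem_univ, true_and] at hy
      obtain ⟨j, hj⟩ := hy
      refine ⟨j, ?_, hj⟩
      rw [hH]
      refine Finset.mem_image.mpr ⟨p, ?_, hp.2⟩
      rw [Finset.mem_filter]
      exact ⟨hp.1, hj.symm⟩
    · rintro ⟨j, hj, rfl⟩
      rw [hH] at hj
      simp only [Finset.mem_image, Finset.mem_filter] at hj
      obtain ⟨p, ⟨hp, hp2⟩, hp1⟩ := hj
      exact ⟨p, ⟨hp, hp1⟩, hp2⟩
  have hVcard : ∀ i : Fin M,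
      (V i).card = (Finset.univ.filter (fun j : Fin N => xbar i ∈ H j)).card := by
    intro i
    rw [hVeq i, Finset.card_image_of_injective _ hyinj]
  -- xbar i ∈ H j ↔ j < (V i).card
  have hkey1 : ∀ (i : Fin M) (j : Fin N), xbar i ∈ H j ↔ (j : ℕ) < (V i).card := by
    intro i j
    rw [hVcard i]
    rw [← downclosed_iff (Finset.univ.filter (fun j : Fin N => xbar i ∈ H j))
      (fun a b hab hb => by
        simp only [Finset.mem_filter, Finset.mem_univ, true_and] at *
        exact hchain a b hab hb)]
    simp
  -- H j as image of a set of indices i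
  have hHsub : ∀ j : Fin N, H j ⊆ Finset.univ.image xbar := by
    intro j
    rw [hH, ← hxim]
    exact Finset.image_subset_image (Finset.filter_subset _ _)
  have hHeq : ∀ j : Fin N,
      H j = (Finset.univ.filter (fun i : Fin M => xbar i ∈ H j)).image xbar := by
    intro j
    ext x
    simp only [Finset.mem_image, Finset.mem_filter, Finset.mem_univ, true_and]
    constructor
    · intro hx
      have := hHsub j hx
      simp only [Finset.mem_image, Finset.mem_univ, true_and] at this
      obtain ⟨i, rfl⟩ := this
      exact ⟨i, hx, rfl⟩
    · rintro ⟨i, hi, rfl⟩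
      exact hi
  have hHcard : ∀ j : Fin N,
      (H j).card = (Finset.univ.filter (fun i : Fin M => xbar i ∈ H j)).card := by
    intro j
    conv_lhs => rw [hHeq j]
    rw [Finset.card_image_of_injective _ hxinj]
  -- xbar i ∈ H j ↔ i < (H j).card
  have hkey2 : ∀ (i : Fin M) (j : Fin N), xbar i ∈ H j ↔ (i : ℕ) < (H j).card := by
    intro i j
    rw [hHcard j]
    rw [← downclosed_iff (Finset.univ.filter (fun i : Fin M => xbar i ∈ H j))
      (fun a b hab hb => by
        simp only [Finset.mem_filter, Finset.mem_univ, true_and] at *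
        rw [hkey1] at hb ⊢
        exact lt_of_lt_of_le hb (hVmono a b hab))]
    simp
  -- cardinality bounds
  have hHle : ∀ j : Fin N, (H j).card ≤ M := by
    intro j
    calc (H j).card ≤ (Finset.univ.image xbar).card := Finset.card_le_card (hHsub j)
    _ = M := by rw [Finset.card_image_of_injective _ hxinj, Finset.card_univ, Fintype.card_fin]
  have hVle : ∀ i : Fin M, (V i).card ≤ N := by
    intro i
    rw [hVcard i]
    calc (Finset.univ.filter (fun j : Fin N => xbar i ∈ H j)).card
        ≤ (Finset.univ : Finset (Fin N)).card := Finset.card_le_card (Finset.filter_subset _ _)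
    _ = N := by rw [Finset.card_univ, Fintype.card_fin]
  ext ⟨i, j⟩
  simp only [Set.mem_setOf_eq]
  constructor
  · rintro ⟨hj, hij⟩
    have hi : i < M := lt_of_lt_of_le hij (hHle ⟨j, hj⟩)
    refine ⟨hi, ?_⟩
    have := (hkey2 ⟨i, hi⟩ ⟨j, hj⟩).mpr hij
    exact (hkey1 ⟨i, hi⟩ ⟨j, hj⟩).mp this
  · rintro ⟨hi, hij⟩
    have hj : j < N := lt_of_lt_of_le hij (hVle ⟨i, hi⟩)
    refine ⟨hj, ?_⟩
    have := (hkey1 ⟨i, hi⟩ ⟨j, hj⟩).mpr hij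
    exact (hkey2 ⟨i, hi⟩ ⟨j, hj⟩).mp this
end

section
/- Let Ξ be a quasi-x-tower set in F² with S_x(Ξ) = L_x(m₀,…,m_ν), and let B ⊂ F² be a finite set of distinct points all with the same ordinate y^B not occurring among the ordinates of Ξ, with pairwise distinct abscissae, such that B ∩ Ξ = ∅ and the union of all sets of abscissae of Ξ is strictly contained in the set of abscissae of B. Then Ξ ∪ B is an x-tower set with S_x(Ξ ∪ B) = L_x(m_B, m₀, …, m_ν), where m_B + 1 = |B| and m_B > m₀ > ⋯ > m_ν. -/
/-!
Prepend `B` to the layers of `Ξ` as the new layer `0`; since every abscissa of `Ξ` is an abscissa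
of `B`, the union is an x-tower set. The only point with content is `m₀ < m_B`: the `m₀ + 1`
distinct abscissae of the largest layer of `Ξ` form a strict subset of the `m_B + 1` abscissae
of `B`.
-/

open Set

theorem lt_of_injective_of_image_ssubset {α : Type*} {a b : ℕ → α} {n N : ℕ}
    (ha : ∀ i i', i ≤ n → i' ≤ n → a i = a i' → i = i')
    (hsub : ∀ i ≤ n, ∃ s ≤ N, a i = b s) (hnew : ∃ s ≤ N, ∀ i ≤ n, a i ≠ b s) : n < N := by
  have hss : a '' Iic n ⊂ b '' Iic N := by
    refine ssubset_iff_subset_ne.2 ⟨?_, fun heq => ?_⟩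
    · rintro _ ⟨i, hi, rfl⟩
      obtain ⟨s, hs, his⟩ := hsub i hi
      exact ⟨s, hs, his.symm⟩
    · obtain ⟨s, hs, hne⟩ := hnew
      obtain ⟨i, hi, his⟩ := heq.symm ▸ mem_image_of_mem b (show s ∈ Iic N from hs)
      exact hne i hi his
  have hinj : InjOn a (Iic n) := fun i hi i' hi' h => ha i i' hi hi' h
  have hcard := (ncard_lt_ncard hss ((finite_Iic N).image b)).trans_le
    (ncard_image_le (finite_Iic N))
  rw [hinj.ncard_image, ← Finset.coe_Iic, ← Finset.coe_Iic, ncard_coe_finset,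
    ncard_coe_finset, Nat.card_Iic, Nat.card_Iic] at hcard
  omega

def layerSet {α β : Type*} (ν : ℕ) (m : ℕ → ℕ) (x : ℕ → ℕ → α) (y : ℕ → β) : Set (α × β) :=
  {p | ∃ j ≤ ν, ∃ i ≤ m j, p = (x j i, y j)}

section Cons

variable {ν : ℕ}

theorem layerSet_cons {α β : Type*} (m : ℕ → ℕ) (x : ℕ → ℕ → α) (y : ℕ → β)
    (mB : ℕ) (xB : ℕ → α) (yB : β) :
    layerSet (ν + 1) (Stream'.cons mB m) (Stream'.cons xB x) (Stream'.cons yB y) =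
      layerSet ν m x y ∪ {p | ∃ s ≤ mB, p = (xB s, yB)} := by
  ext p
  simp only [layerSet, mem_union, mem_ofPred_eq]
  constructor
  · rintro ⟨_ | j, hj, i, hi, rfl⟩
    · exact Or.inr ⟨i, hi, rfl⟩
    · exact Or.inl ⟨j, by omega, i, hi, rfl⟩
  · rintro (⟨j, hj, i, hi, rfl⟩ | ⟨s, hs, rfl⟩)
    · exact ⟨j + 1, by omega, i, hi, rfl⟩
    · exact ⟨0, by omega, s, hs, rfl⟩

theorem cons_succ_lt {m : ℕ → ℕ} {mB : ℕ} (hm : ∀ j, j < ν → m (j + 1) < m j)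
    (hmB : m 0 < mB) : ∀ j, j < ν + 1 → Stream'.cons mB m (j + 1) < Stream'.cons mB m j := by
  rintro (_ | j) hj
  · exact hmB
  · exact hm j (by omega)

theorem cons_injective {β : Type*} {y : ℕ → β} {yB : β}
    (hy : ∀ j j', j ≤ ν → j' ≤ ν → y j = y j' → j = j') (hyB : ∀ j, j ≤ ν → yB ≠ y j) :
    ∀ j j', j ≤ ν + 1 → j' ≤ ν + 1 → Stream'.cons yB y j = Stream'.cons yB y j' → j = j' := by
  rintro (_ | j) (_ | j') hj hj' h
  · rfl
  · exact absurd h (hyB j' (by omega))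
  · exact absurd h.symm (hyB j (by omega))
  · exact congrArg Nat.succ (hy j j' (by omega) (by omega) h)

theorem cons_layer_injective {α : Type*} {m : ℕ → ℕ} {x : ℕ → ℕ → α} {mB : ℕ} {xB : ℕ → α}
    (hx : ∀ j, j ≤ ν → ∀ i i', i ≤ m j → i' ≤ m j → x j i = x j i' → i = i')
    (hxB : ∀ s s', s ≤ mB → s' ≤ mB → xB s = xB s' → s = s') :
    ∀ j, j ≤ ν + 1 → ∀ i i', i ≤ Stream'.cons mB m j → i' ≤ Stream'.cons mB m j →
      Stream'.cons xB x j i = Stream'.cons xB x j i' → i = i' := by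
  rintro (_ | j) hj
  · exact hxB
  · exact hx j (by omega)

theorem cons_mem_bottom_layer {α : Type*} {m : ℕ → ℕ} {x : ℕ → ℕ → α} {mB : ℕ} {xB : ℕ → α}
    (hsub : ∀ j, j ≤ ν → ∀ i, i ≤ m j → ∃ s ≤ mB, x j i = xB s) :
    ∀ j, j ≤ ν + 1 → ∀ i, i ≤ Stream'.cons mB m j →
      ∃ s ≤ Stream'.cons mB m 0, Stream'.cons xB x j i = Stream'.cons xB x 0 s := by
  rintro (_ | j) hj i hi
  · exact ⟨i, hi, rfl⟩
  · exact hsub j (by omega) i hi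

end Cons

theorem stmt_6_general {F : Type*} [Field F]
    (ν : ℕ) (m : ℕ → ℕ) (y : ℕ → F) (x : ℕ → ℕ → F)
    (hm : ∀ j, j < ν → m (j + 1) < m j)
    (hy : ∀ j j', j ≤ ν → j' ≤ ν → y j = y j' → j = j')
    (hx : ∀ j, j ≤ ν → ∀ i i', i ≤ m j → i' ≤ m j → x j i = x j i' → i = i')
    (Ξ : Set (F × F))
    (hΞ : Ξ = {p | ∃ j ≤ ν, ∃ i ≤ m j, p = (x j i, y j)})
    (mB : ℕ) (xB : ℕ → F) (yB : F)
    (hxB : ∀ s s', s ≤ mB → s' ≤ mB → xB s = xB s' → s = s')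
    (hyB : ∀ j, j ≤ ν → yB ≠ y j)
    (B : Set (F × F)) (hB : B = {p | ∃ s ≤ mB, p = (xB s, yB)})
    (hsub : ∀ j, j ≤ ν → ∀ i, i ≤ m j → ∃ s ≤ mB, x j i = xB s)
    (hstrict : ∃ s ≤ mB, ∀ j, j ≤ ν → ∀ i, i ≤ m j → x j i ≠ xB s) :
    m 0 < mB ∧
      ∃ (m' : ℕ → ℕ) (y' : ℕ → F) (x' : ℕ → ℕ → F),
        m' 0 = mB ∧ (∀ j, j ≤ ν → m' (j + 1) = m j) ∧
        (∀ j, j < ν + 1 → m' (j + 1) < m' j) ∧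
        (∀ j j', j ≤ ν + 1 → j' ≤ ν + 1 → y' j = y' j' → j = j') ∧
        (∀ j, j ≤ ν + 1 → ∀ i i', i ≤ m' j → i' ≤ m' j → x' j i = x' j i' → i = i') ∧
        (∀ j, j ≤ ν + 1 → ∀ i, i ≤ m' j → ∃ s ≤ m' 0, x' j i = x' 0 s) ∧
        Ξ ∪ B = {p | ∃ j ≤ ν + 1, ∃ i ≤ m' j, p = (x' j i, y' j)} := by
  have hm₀ : m 0 < mB :=
    lt_of_injective_of_image_ssubset (hx 0 ν.zero_le) (hsub 0 ν.zero_le)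
      (let ⟨s, hs, hne⟩ := hstrict; ⟨s, hs, hne 0 ν.zero_le⟩)
  refine ⟨hm₀, Stream'.cons mB m, Stream'.cons yB y, Stream'.cons xB x, rfl, fun _ _ => rfl,
    cons_succ_lt hm hm₀, cons_injective hy hyB, cons_layer_injective hx hxB,
    cons_mem_bottom_layer hsub, ?_⟩
  rw [hΞ, hB]
  exact (layerSet_cons m x y mB xB yB).symm

/-- Let `Ξ` be a quasi-x-tower set with `S_x(Ξ) = L_x(m₀,…,m_ν)`, and let `B` be a horizontal
set of distinct points with new ordinate `y^B`, disjoint from `Ξ`, whose abscissa set strictly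
contains the union of all abscissa sets of `Ξ`. Then `Ξ ∪ B` is an x-tower set with
`S_x(Ξ ∪ B) = L_x(m_B, m₀, …, m_ν)`, where `m_B + 1 = |B|` and `m_B > m₀ > ⋯ > m_ν`. -/
theorem stmt_6 {F : Type*} [Field F]
    (ν : ℕ) (m : ℕ → ℕ) (y : ℕ → F) (x : ℕ → ℕ → F)
    (hm : ∀ j, j < ν → m (j + 1) < m j)
    (hy : ∀ j j', j ≤ ν → j' ≤ ν → y j = y j' → j = j')
    (hx : ∀ j, j ≤ ν → ∀ i i', i ≤ m j → i' ≤ m j → x j i = x j i' → i = i')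
    (Ξ : Set (F × F))
    (hΞ : Ξ = {p | ∃ j ≤ ν, ∃ i ≤ m j, p = (x j i, y j)})
    (hquasi : ∃ j ≤ ν, ∃ i ≤ m j, ∀ s ≤ m 0, x j i ≠ x 0 s)
    (mB : ℕ) (xB : ℕ → F) (yB : F)
    (hxB : ∀ s s', s ≤ mB → s' ≤ mB → xB s = xB s' → s = s')
    (hyB : ∀ j, j ≤ ν → yB ≠ y j)
    (B : Set (F × F)) (hB : B = {p | ∃ s ≤ mB, p = (xB s, yB)})
    (hdisj : B ∩ Ξ = ∅)
    (hsub : ∀ j, j ≤ ν → ∀ i, i ≤ m j → ∃ s ≤ mB, x j i = xB s)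
    (hstrict : ∃ s ≤ mB, ∀ j, j ≤ ν → ∀ i, i ≤ m j → x j i ≠ xB s) :
    m 0 < mB ∧
      ∃ (m' : ℕ → ℕ) (y' : ℕ → F) (x' : ℕ → ℕ → F),
        m' 0 = mB ∧ (∀ j, j ≤ ν → m' (j + 1) = m j) ∧
        (∀ j, j < ν + 1 → m' (j + 1) < m' j) ∧
        (∀ j j', j ≤ ν + 1 → j' ≤ ν + 1 → y' j = y' j' → j = j') ∧
        (∀ j, j ≤ ν + 1 → ∀ i i', i ≤ m' j → i' ≤ m' j → x' j i = x' j i' → i = i') ∧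
        (∀ j, j ≤ ν + 1 → ∀ i, i ≤ m' j → ∃ s ≤ m' 0, x' j i = x' 0 s) ∧
        Ξ ∪ B = {p | ∃ j ≤ ν + 1, ∃ i ≤ m' j, p = (x' j i, y' j)} :=
  stmt_6_general ν m y x hm hy hx Ξ hΞ mB xB yB hxB hyB B hB hsub hstrict
end

section
/- For every quasi-x-tower set Ξ ⊂ F² over an infinite field F, there exist infinitely many x-tower sets of the form Ξ ∪ B, where B is a finite horizontal set (all points sharing one new ordinate, distinct abscissae) with B ∩ Ξ = ∅ whose abscissa set strictly contains the union of all abscissa sets of Ξ. -/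
/-- `Ξ ⊆ F²` is an x-tower set: there is a strictly decreasing tuple `m₀ > ⋯ > m_ν ≥ 0`,
distinct ordinates `y_j`, and abscissae `x_{ij}` (distinct for fixed `j`) all belonging to the
abscissa set `H₀` of the largest horizontal layer, with
`Ξ = {(x_{ij}, y_j) : j ≤ ν, i ≤ m_j}`. -/
def IsXTower {F : Type*} [Field F] (Ξ : Set (F × F)) : Prop :=
  ∃ (ν : ℕ) (m : ℕ → ℕ) (y : ℕ → F) (x : ℕ → ℕ → F),
    (∀ j, j < ν → m (j + 1) < m j) ∧
    (∀ j j', j ≤ ν → j' ≤ ν → y j = y j' → j = j') ∧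
    (∀ j, j ≤ ν → ∀ i i', i ≤ m j → i' ≤ m j → x j i = x j i' → i = i') ∧
    (∀ j, j ≤ ν → ∀ i, i ≤ m j → ∃ s ≤ m 0, x j i = x 0 s) ∧
    Ξ = {p | ∃ j ≤ ν, ∃ i ≤ m j, p = (x j i, y j)}

/-- For every quasi-x-tower set `Ξ` over an infinite field `F`, there are infinitely many
horizontal base sets `B` (all points on one new horizontal line, distinct abscissae, disjoint
from `Ξ`, abscissa set strictly containing all abscissae of `Ξ`) such that `Ξ ∪ B` is an
x-tower set. -/
theorem stmt_7 {F : Type*} [Field F] [Infinite F]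
    (ν : ℕ) (m : ℕ → ℕ) (y : ℕ → F) (x : ℕ → ℕ → F)
    (hm : ∀ j, j < ν → m (j + 1) < m j)
    (hy : ∀ j j', j ≤ ν → j' ≤ ν → y j = y j' → j = j')
    (hx : ∀ j, j ≤ ν → ∀ i i', i ≤ m j → i' ≤ m j → x j i = x j i' → i = i')
    (Ξ : Set (F × F))
    (hΞ : Ξ = {p | ∃ j ≤ ν, ∃ i ≤ m j, p = (x j i, y j)})
    (hquasi : ¬ IsXTower Ξ) :
    {B : Set (F × F) |
      (∃ (mB : ℕ) (xB : ℕ → F) (yB : F),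
        (∀ s s', s ≤ mB → s' ≤ mB → xB s = xB s' → s = s') ∧
        (∀ p ∈ Ξ, p.2 ≠ yB) ∧
        B = {p | ∃ s ≤ mB, p = (xB s, yB)} ∧
        B ∩ Ξ = ∅ ∧
        (∀ p ∈ Ξ, ∃ s ≤ mB, p.1 = xB s) ∧
        (∃ s ≤ mB, ∀ p ∈ Ξ, p.1 ≠ xB s)) ∧
      IsXTower (Ξ ∪ B)}.Infinite := by
  classical
  set S : Set F := {a : F | ∃ j ≤ ν, ∃ i ≤ m j, a = x j i} with hSdef
  have hSfin : S.Finite := by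
    apply Set.Finite.subset
      (Finset.finite_toSet ((Finset.range (ν+1)).biUnion fun j => (Finset.range (m j + 1)).image (x j)))
    rintro a ⟨j, hj, i, hi, rfl⟩
    simp only [Finset.coe_biUnion, Finset.mem_coe, Finset.mem_range, Set.mem_iUnion,
      Finset.coe_image, Set.mem_image]
    exact ⟨j, by omega, i, by simp [Finset.mem_range]; omega⟩
  obtain ⟨xs, hxs⟩ := hSfin.infinite_compl.nonempty
  have hxsS : xs ∉ S := hxs
  set T : Finset F := insert xs hSfin.toFinset with hT
  set l : List F := T.toList with hl
  have hlnd : l.Nodup := T.nodup_toList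
  have hmemT : ∀ a : F, a ∈ l ↔ a ∈ T := fun a => T.mem_toList
  have hlenT : l.length = T.card := T.length_toList
  have hST : ∀ a ∈ S, a ∈ T := by
    intro a ha
    rw [hT, Finset.mem_insert, hSfin.mem_toFinset]
    exact Or.inr ha
  have hcard : m 0 + 2 ≤ T.card := by
    have h1 : (Finset.range (m 0 + 1)).image (x 0) ⊆ hSfin.toFinset := by
      intro a ha
      simp only [Finset.mem_image, Finset.mem_range] at ha
      obtain ⟨i, hi, rfl⟩ := ha
      rw [hSfin.mem_toFinset]
      exact ⟨0, Nat.zero_le _, i, by omega, rfl⟩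
    have h2 : ((Finset.range (m 0 + 1)).image (x 0)).card = m 0 + 1 := by
      rw [Finset.card_image_of_injOn, Finset.card_range]
      intro i hi i' hi' h
      simp only [Finset.coe_range, Set.mem_Iio] at hi hi'
      exact hx 0 (Nat.zero_le _) i i' (by omega) (by omega) h
    have h3 : m 0 + 1 ≤ hSfin.toFinset.card := h2 ▸ Finset.card_le_card h1
    have h4 : T.card = hSfin.toFinset.card + 1 := by
      rw [hT, Finset.card_insert_of_notMem]
      rw [hSfin.mem_toFinset]; exact hxsS
    omega
  have hlenpos : m 0 + 2 ≤ l.length := by rw [hlenT]; exact hcard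
  set mB : ℕ := l.length - 1 with hmB
  have hmBge : m 0 + 1 ≤ mB := by omega
  set xB : ℕ → F := fun s => l.getD s xs with hxB
  have hxBmem : ∀ s ≤ mB, xB s ∈ T := by
    intro s hs
    have hsl : s < l.length := by omega
    rw [hxB]
    simp only [List.getD_eq_getElem l xs hsl]
    rw [← hmemT]
    exact List.getElem_mem hsl
  have hxBinj : ∀ s s', s ≤ mB → s' ≤ mB → xB s = xB s' → s = s' := by
    intro s s' hs hs' h
    have h1 : s < l.length := by omega
    have h2 : s' < l.length := by omega
    rw [hxB] at h
    simp only [List.getD_eq_getElem l xs h1, List.getD_eq_getElem l xs h2] at h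
    exact (List.Nodup.getElem_inj_iff hlnd).mp h
  have hxBsurj : ∀ a ∈ T, ∃ s ≤ mB, a = xB s := by
    intro a ha
    rw [← hmemT] at ha
    obtain ⟨s, hsl, hseq⟩ := List.getElem_of_mem ha
    refine ⟨s, by omega, ?_⟩
    rw [hxB]
    simp only [List.getD_eq_getElem l xs hsl]
    exact hseq.symm
  obtain ⟨s₀, hs₀, hs₀eq⟩ := hxBsurj xs (by rw [hT]; exact Finset.mem_insert_self _ _)
  have hΞmem : ∀ p ∈ Ξ, p.1 ∈ S ∧ ∃ j ≤ ν, p.2 = y j := by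
    intro p hp
    rw [hΞ] at hp
    obtain ⟨j, hj, i, hi, rfl⟩ := hp
    exact ⟨⟨j, hj, i, hi, rfl⟩, ⟨j, hj, rfl⟩⟩
  -- the family of base sets, indexed by the new ordinate c
  set Yfin : Finset F := (Finset.range (ν+1)).image y with hYfin
  set good : Set F := (↑Yfin : Set F)ᶜ with hgood
  have hgoodinf : good.Infinite := (Yfin.finite_toSet).infinite_compl
  set Bf : F → Set (F × F) := fun c => {p | ∃ s ≤ mB, p = (xB s, c)} with hBf
  have hkey : ∀ c ∈ good, Bf c ∈ {B : Set (F × F) |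
      (∃ (mB' : ℕ) (xB' : ℕ → F) (yB : F),
        (∀ s s', s ≤ mB' → s' ≤ mB' → xB' s = xB' s' → s = s') ∧
        (∀ p ∈ Ξ, p.2 ≠ yB) ∧
        B = {p | ∃ s ≤ mB', p = (xB' s, yB)} ∧
        B ∩ Ξ = ∅ ∧
        (∀ p ∈ Ξ, ∃ s ≤ mB', p.1 = xB' s) ∧
        (∃ s ≤ mB', ∀ p ∈ Ξ, p.1 ≠ xB' s)) ∧
      IsXTower (Ξ ∪ Bf c)} := by
    intro c hc
    have hcy : ∀ j ≤ ν, c ≠ y j := by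
      intro j hj hcj
      apply hc
      rw [hYfin]
      simp only [Finset.coe_image, Finset.coe_range, Set.mem_image, Set.mem_Iio]
      exact ⟨j, by omega, hcj.symm⟩
    have hne : ∀ p ∈ Ξ, p.2 ≠ c := by
      intro p hp hpc
      obtain ⟨-, j, hj, hpj⟩ := hΞmem p hp
      exact hcy j hj (hpc.symm.trans hpj)
    constructor
    · refine ⟨mB, xB, c, hxBinj, hne, rfl, ?_, ?_, ?_⟩
      · ext p
        simp only [Set.mem_inter_iff, Set.mem_empty_iff_false, iff_false, not_and]
        rintro ⟨s, hs, rfl⟩ hpΞ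
        exact hne _ hpΞ rfl
      · intro p hp
        obtain ⟨hpS, -⟩ := hΞmem p hp
        obtain ⟨s, hs, hseq⟩ := hxBsurj p.1 (hST _ hpS)
        exact ⟨s, hs, hseq⟩
      · refine ⟨s₀, hs₀, ?_⟩
        intro p hp hps
        obtain ⟨hpS, -⟩ := hΞmem p hp
        rw [hps, ← hs₀eq] at hpS
        exact hxsS hpS
    · -- x-tower structure on Ξ ∪ Bf c
      refine ⟨ν + 1, fun j => if j = 0 then mB else m (j-1),
        fun j => if j = 0 then c else y (j-1),
        fun j => if j = 0 then xB else x (j-1), ?_, ?_, ?_, ?_, ?_⟩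
      · intro j hj
        rcases Nat.eq_zero_or_pos j with rfl | hjpos
        · simpa using hmBge.trans_lt' (by omega)
        · have hj1 : j - 1 < ν := by omega
          simp only [if_neg (by omega : j + 1 ≠ 0), if_neg (by omega : j ≠ 0)]
          have := hm (j-1) hj1
          have hjj : j - 1 + 1 = j := by omega
          rw [hjj] at this
          simpa using (by simpa [Nat.add_sub_cancel] using this : m j < m (j-1))
      · intro j j' hj hj' hyy
        rcases Nat.eq_zero_or_pos j with rfl | hjpos <;>
          rcases Nat.eq_zero_or_pos j' with rfl | hj'pos
        · rfl
        · exfalso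
          simp only [if_pos rfl, if_neg (by omega : j' ≠ 0)] at hyy
          exact hcy (j'-1) (by omega) hyy
        · exfalso
          simp only [if_pos rfl, if_neg (by omega : j ≠ 0)] at hyy
          exact hcy (j-1) (by omega) hyy.symm
        · simp only [if_neg (by omega : j ≠ 0), if_neg (by omega : j' ≠ 0)] at hyy
          have := hy (j-1) (j'-1) (by omega) (by omega) hyy
          omega
      · intro j hj i i' hi hi'
        rcases Nat.eq_zero_or_pos j with rfl | hjpos
        · simp only [if_pos rfl] at hi hi' ⊢
          exact hxBinj i i' hi hi'
        · simp only [if_neg (by omega : j ≠ 0)] at hi hi' ⊢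
          exact hx (j-1) (by omega) i i' hi hi'
      · intro j hj i hi
        rcases Nat.eq_zero_or_pos j with rfl | hjpos
        · exact ⟨i, by simpa using hi, rfl⟩
        · simp only [if_neg (by omega : j ≠ 0)] at hi ⊢
          have hmemS : x (j-1) i ∈ S := ⟨j-1, by omega, i, hi, rfl⟩
          obtain ⟨s, hs, hseq⟩ := hxBsurj _ (hST _ hmemS)
          exact ⟨s, by simpa using hs, by simpa using hseq⟩
      · ext p
        simp only [Set.mem_union, Set.mem_setOf_eq]
        constructor
        · rintro (hp | hp)
          · rw [hΞ] at hp
            obtain ⟨j, hj, i, hi, rfl⟩ := hp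
            refine ⟨j + 1, by omega, i, ?_, ?_⟩
            · simpa using hi
            · simp
          · obtain ⟨s, hs, rfl⟩ := hp
            exact ⟨0, by omega, s, by simpa using hs, by simp⟩
        · rintro ⟨j, hj, i, hi, rfl⟩
          rcases Nat.eq_zero_or_pos j with rfl | hjpos
          · right
            simp only [if_pos rfl] at hi ⊢
            exact ⟨i, hi, rfl⟩
          · left
            rw [hΞ]
            simp only [if_neg (by omega : j ≠ 0)] at hi ⊢
            exact ⟨j-1, by omega, i, hi, rfl⟩
  -- conclude: infinitely many such B
  have hinjB : Set.InjOn Bf good := by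
    intro c hc c' hc' hcc
    have h0 : (xB 0, c) ∈ Bf c := ⟨0, by omega, rfl⟩
    rw [hcc] at h0
    obtain ⟨s, hs, heq⟩ := h0
    exact (Prod.mk.injEq _ _ _ _ ▸ heq).2
  have hsub : Bf '' good ⊆ {B : Set (F × F) |
      (∃ (mB' : ℕ) (xB' : ℕ → F) (yB : F),
        (∀ s s', s ≤ mB' → s' ≤ mB' → xB' s = xB' s' → s = s') ∧
        (∀ p ∈ Ξ, p.2 ≠ yB) ∧
        B = {p | ∃ s ≤ mB', p = (xB' s, yB)} ∧
        B ∩ Ξ = ∅ ∧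
        (∀ p ∈ Ξ, ∃ s ≤ mB', p.1 = xB' s) ∧
        (∃ s ≤ mB', ∀ p ∈ Ξ, p.1 ≠ xB' s)) ∧
      IsXTower (Ξ ∪ B)} := by
    rintro B ⟨c, hc, rfl⟩
    exact hkey c hc
  exact Set.Infinite.mono hsub (Set.Infinite.image hinjB hgoodinf)
end

section
/- A quasi-x-tower set is never a cartesian set: if Ξ ⊂ F² is a generalized x-tower set that is not x-tower, then S_x(Ξ) ≠ S_y(Ξ). -/
/-- A quasi-x-tower set is never cartesian: if `Ξ` is a generalized x-tower set (so
`S_x(Ξ) = L_x(m₀,…,m_ν)` with `m₀ > ⋯ > m_ν ≥ 0`) that is not x-tower (some point of `Ξ` has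
abscissa outside `H₀(Ξ)`), and `S_y(Ξ) = L_y(n₀,…,n_λ)` is obtained by covering `Ξ` with
vertical lines sorted by weakly decreasing number of points, then `S_x(Ξ) ≠ S_y(Ξ)`. -/
theorem stmt_8 {F : Type*} [Field F]
    (ν : ℕ) (m : ℕ → ℕ) (y : ℕ → F) (x : ℕ → ℕ → F)
    (hm : ∀ j, j < ν → m (j + 1) < m j)
    (hy : ∀ j j', j ≤ ν → j' ≤ ν → y j = y j' → j = j')
    (hx : ∀ j, j ≤ ν → ∀ i i', i ≤ m j → i' ≤ m j → x j i = x j i' → i = i')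
    (Ξ : Set (F × F))
    (hΞ : Ξ = {p | ∃ j ≤ ν, ∃ i ≤ m j, p = (x j i, y j)})
    (hquasi : ∃ j ≤ ν, ∃ i ≤ m j, ∀ s ≤ m 0, x j i ≠ x 0 s)
    -- the vertical-line covering of Ξ:
    (lam : ℕ) (xbar : ℕ → F) (n : ℕ → ℕ)
    (hxbar : ∀ i i', i ≤ lam → i' ≤ lam → xbar i = xbar i' → i = i')
    (hcover : ∀ p ∈ Ξ, ∃ i ≤ lam, p.1 = xbar i)
    (honto : ∀ i, i ≤ lam → ∃ p ∈ Ξ, p.1 = xbar i)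
    (hn : ∀ i, i ≤ lam → n i + 1 = Nat.card {p : F × F | p ∈ Ξ ∧ p.1 = xbar i})
    (hnmono : ∀ i k, i ≤ k → k ≤ lam → n k ≤ n i) :
    {q : ℕ × ℕ | q.2 ≤ ν ∧ q.1 ≤ m q.2} ≠ {q : ℕ × ℕ | q.1 ≤ lam ∧ q.2 ≤ n q.1} := by

  intro hEq
  classical
  have hΞ0 : ∀ s, s ≤ m 0 → (x 0 s, y 0) ∈ Ξ := by
    intro s hs; rw [hΞ]; exact ⟨0, Nat.zero_le _, s, hs, rfl⟩
  have hlam_le : lam ≤ m 0 := by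
    have hmem : (lam, 0) ∈ {q : ℕ × ℕ | q.1 ≤ lam ∧ q.2 ≤ n q.1} := ⟨le_refl _, Nat.zero_le _⟩
    rw [← hEq] at hmem
    exact hmem.2
  have hchoice : ∀ s, s ≤ m 0 → ∃ i, i ≤ lam ∧ x 0 s = xbar i := by
    intro s hs
    obtain ⟨i, hi, h⟩ := hcover (x 0 s, y 0) (hΞ0 s hs)
    exact ⟨i, hi, h⟩
  choose! f hf1 hf2 using hchoice
  have hmaps : ∀ a ∈ Finset.range (m 0 + 1), f a ∈ Finset.range (lam + 1) := by
    intro a ha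
    simp only [Finset.mem_range, Nat.lt_succ_iff] at ha ⊢
    exact hf1 a ha
  have hinj : ∀ a₁ ∈ Finset.range (m 0 + 1), ∀ a₂ ∈ Finset.range (m 0 + 1),
      f a₁ = f a₂ → a₁ = a₂ := by
    intro s hs s' hs' hss
    simp only [Finset.mem_range, Nat.lt_succ_iff] at hs hs'
    refine hx 0 (Nat.zero_le _) s s' hs hs' ?_
    rw [hf2 s hs, hf2 s' hs', hss]
  have hcard : (Finset.range (lam + 1)).card ≤ (Finset.range (m 0 + 1)).card := by
    simp only [Finset.card_range]
    exact Nat.succ_le_succ hlam_le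
  have hsurj := Finset.surj_on_of_inj_on_of_card_le (fun a _ => f a) hmaps
    (fun a₁ a₂ h₁ h₂ h => hinj a₁ h₁ a₂ h₂ h) hcard
  obtain ⟨j, hj, i, hi, hne⟩ := hquasi
  have hmemΞ : (x j i, y j) ∈ Ξ := by
    rw [hΞ]; exact ⟨j, hj, i, hi, rfl⟩
  obtain ⟨i', hi', hx'⟩ := hcover (x j i, y j) hmemΞ
  obtain ⟨s, hs, hfs⟩ := hsurj i' (by simp [Nat.lt_succ_iff, hi'])
  simp only [Finset.mem_range, Nat.lt_succ_iff] at hs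
  exact hne s hs (by rw [show x j i = xbar i' from hx', hfs, ← hf2 s hs])
end

section
/- With Ξ and φ_{ij}, (i,j) ∈ S, as in the Newton-basis construction for a generalized x-tower set, the family {φ_{ij} : (i,j) ∈ S} is linearly independent over F, and its span equals the span of the monomials {x^i y^j : (i,j) ∈ S}; in particular it is a basis of a |S|-dimensional space solving the Lagrange interpolation problem on Ξ uniquely. -/
/-!
Order the nodes `(x_{ij}, y_j)` lexicographically by `(j, i)`. The Newton polynomial `φ_{i'j'}`
vanishes at every node preceding `(i', j')`: a node on a lower line `y = y_j`, `j < j'`, kills the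
factor `y - y_j`, and an earlier node `(x_{ij'}, y_{j'})` on the same line kills `x - x_{ij'}`.
At its own node it takes the value `1`, as the `y_j` and the `x_{·j}` are distinct. Hence the
evaluation matrix is unitriangular, which gives linear independence of the `φ_{ij}` and unique
interpolation in their span. Since `m` decreases, `S` is a lower set of `ℕ × ℕ`, so the monomials
`x^s y^t`, `s ≤ i`, `t ≤ j`, into which `φ_{ij}` expands are indexed by `S`; the two spans then
agree by dimension count.
-/

open MvPolynomial Submodule Set Finset

namespace Matrix

variable {ι α R : Type*} [Fintype ι] [DecidableEq ι] [LinearOrder α] {b : ι → α}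

theorem BlockTriangular.det_eq_prod_diag [CommRing R] {M : Matrix ι ι R}
    (hM : M.BlockTriangular b) (hb : Function.Injective b) : M.det = ∏ i, M i i := by
  let : LinearOrder ι := LinearOrder.lift' b hb
  exact det_of_isUpperTriangular hM

theorem BlockTriangular.linearIndependent_rows [CommRing R] [IsDomain R] {M : Matrix ι ι R}
    (hM : M.BlockTriangular b) (hb : Function.Injective b) (hdiag : ∀ i, M i i ≠ 0) :
    LinearIndependent R fun i => M i :=
  linearIndependent_rows_of_det_ne_zero <| by
    rw [hM.det_eq_prod_diag hb]
    exact prod_ne_zero_iff.mpr fun i _ => hdiag i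

end Matrix

section Interpolation

variable {F V ι : Type*} [Field F] [AddCommGroup V] [Module F V] [Finite ι]

theorem span_range_eq_of_le_of_linearIndependent {f g : ι → V} (hf : LinearIndependent F f)
    (hg : LinearIndependent F g) (hle : span F (range f) ≤ span F (range g)) :
    span F (range f) = span F (range g) :=
  have := Fintype.ofFinite ι
  have : FiniteDimensional F (span F (range g)) := .span_of_finite F (finite_range g)
  eq_of_le_of_finrank_le hle <| by rw [finrank_span_eq_card hf, finrank_span_eq_card hg]

theorem existsUnique_mem_span_forall_apply_eq {f : ι → V} {ℓ : ι → V →ₗ[F] F}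
    (h : LinearIndependent F fun k k' => ℓ k' (f k)) (w : ι → F) :
    ∃! u, u ∈ span F (range f) ∧ ∀ k, ℓ k u = w k := by
  have := Fintype.ofFinite ι
  have htop : span F (range fun k k' => ℓ k' (f k)) = ⊤ :=
    h.span_eq_top_of_card_eq_finrank' (by simp)
  obtain ⟨c, hc⟩ := (mem_span_range_iff_exists_fun F).mp (htop ▸ mem_top : w ∈ _)
  refine ⟨∑ k, c k • f k, ⟨sum_mem fun k _ => smul_mem _ _ (subset_span ⟨k, rfl⟩), ?_⟩, ?_⟩
  · intro k
    simp [← hc]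
  · rintro u ⟨hu, hwu⟩
    obtain ⟨d, rfl⟩ := (mem_span_range_iff_exists_fun F).mp hu
    have hdc : d = c := funext <| h.eq_coords_of_eq <| by
      ext k
      simpa [← hc] using hwu k
    rw [hdc]

end Interpolation

section Polynomials

variable {F : Type*} [Field F]

theorem prod_X_sub_C_mem_span_X_pow {σ : Type*} (k : σ) (c : ℕ → F) (n : ℕ) :
    ∏ t ∈ range n, (X k - C (c t)) ∈ span F ((X k ^ ·) '' Iic n : Set (MvPolynomial σ F)) := by
  have hprod : ∏ t ∈ range n, (X k - C (c t)) =
      Polynomial.aeval (X k : MvPolynomial σ F)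
        (∏ t ∈ range n, (Polynomial.X - Polynomial.C (c t))) := by
    simp [map_prod, algebraMap_eq]
  rw [hprod, Polynomial.aeval_eq_sum_range' (n := n + 1) (by simp)]
  exact sum_mem fun t ht =>
    smul_mem _ _ (subset_span ⟨t, Nat.lt_succ_iff.mp (Finset.mem_range.mp ht), rfl⟩)

theorem linearIndependent_X_zero_pow_mul_X_one_pow :
    LinearIndependent F fun d : ℕ × ℕ => (X 0 ^ d.1 * X 1 ^ d.2 : MvPolynomial (Fin 2) F) := by
  have hinj : Function.Injective fun d : ℕ × ℕ =>
      Finsupp.single (0 : Fin 2) d.1 + Finsupp.single 1 d.2 := by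
    intro d d' h
    exact Prod.ext (by simpa using DFunLike.congr_fun h 0) (by simpa using DFunLike.congr_fun h 1)
  have hmono : (fun d : ℕ × ℕ => (X 0 ^ d.1 * X 1 ^ d.2 : MvPolynomial (Fin 2) F)) =
      fun d => basisMonomials (Fin 2) F (Finsupp.single 0 d.1 + Finsupp.single 1 d.2) := by
    funext d
    simp [X_pow_eq_monomial, monomial_mul]
  rw [hmono]
  exact (basisMonomials (Fin 2) F).linearIndependent.comp _ hinj

theorem mul_mem_span_X_zero_pow_mul_X_one_pow {S : Set (ℕ × ℕ)} (hS : IsLowerSet S) {i j : ℕ}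
    (hij : (i, j) ∈ S) {p q : MvPolynomial (Fin 2) F} (hp : p ∈ span F ((X 0 ^ ·) '' Iic i))
    (hq : q ∈ span F ((X 1 ^ ·) '' Iic j)) :
    p * q ∈ span F (range fun d : S => X 0 ^ d.1.1 * X 1 ^ d.1.2) := by
  have hpq := Submodule.mul_mem_mul hp hq
  rw [span_mul_span] at hpq
  refine span_le.mpr ?_ hpq
  rintro _ ⟨_, ⟨s, hs, rfl⟩, _, ⟨t, ht, rfl⟩, rfl⟩
  exact subset_span ⟨⟨(s, t), hS (Prod.mk_le_mk.mpr ⟨hs, ht⟩) hij⟩, rfl⟩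

-- `(i, j)` stands for the node `(x_{ij}, y_j)`: the `i`-th abscissa on the line `y = y_j`.
def xTowerSet (ν : ℕ) (m : ℕ → ℕ) : Set (ℕ × ℕ) := {q | q.2 ≤ ν ∧ q.1 ≤ m q.2}

theorem xTowerSet_finite (ν : ℕ) (m : ℕ → ℕ) : (xTowerSet ν m).Finite :=
  (Set.finite_Iic (∑ j ∈ range (ν + 1), m j, ν)).subset fun _ hq =>
    ⟨hq.2.trans (single_le_sum (fun _ _ => Nat.zero_le _)
      (Finset.mem_range.mpr (Nat.lt_succ_of_le hq.1))), hq.1⟩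

theorem isLowerSet_xTowerSet {ν : ℕ} {m : ℕ → ℕ} (hm : AntitoneOn m (Set.Iic ν)) :
    IsLowerSet (xTowerSet ν m) := fun _ q' hq'q hq =>
  have hj : q'.2 ≤ ν := hq'q.2.trans hq.1
  ⟨hj, hq'q.1.trans (hq.2.trans (hm hj hq.1 hq'q.2))⟩

section Newton

variable (y : ℕ → F) (xc : ℕ → ℕ → F)

noncomputable def newtonPoly (i j : ℕ) : MvPolynomial (Fin 2) F :=
  C (((∏ t ∈ range j, (y j - y t)) * ∏ s ∈ range i, (xc j i - xc j s))⁻¹) *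
    (∏ t ∈ range j, (X 1 - C (y t))) * ∏ s ∈ range i, (X 0 - C (xc j s))

theorem eval_newtonPoly (i j : ℕ) (a b : F) :
    eval ![a, b] (newtonPoly y xc i j) =
      ((∏ t ∈ range j, (y j - y t)) * ∏ s ∈ range i, (xc j i - xc j s))⁻¹ *
        ((∏ t ∈ range j, (b - y t)) * ∏ s ∈ range i, (a - xc j s)) := by
  simp [newtonPoly, map_prod, mul_assoc]

theorem eval_newtonPoly_of_toLex_lt {i j i' j' : ℕ} (h : toLex (j, i) < toLex (j', i')) :
    eval ![xc j i, y j] (newtonPoly y xc i' j') = 0 := by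
  rw [eval_newtonPoly]
  rcases Prod.Lex.toLex_lt_toLex.mp h with hj | ⟨rfl, hi⟩
  · exact mul_eq_zero_of_right _ <|
      mul_eq_zero_of_left (prod_eq_zero (Finset.mem_range.mpr hj) (sub_self (y j))) _
  · exact mul_eq_zero_of_right _ <|
      mul_eq_zero_of_right _ (prod_eq_zero (Finset.mem_range.mpr hi) (sub_self (xc j i)))

theorem eval_newtonPoly_self {i j : ℕ} (hy : ∀ t < j, y t ≠ y j)
    (hx : ∀ s < i, xc j s ≠ xc j i) :
    eval ![xc j i, y j] (newtonPoly y xc i j) = 1 := by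
  rw [eval_newtonPoly]
  refine inv_mul_cancel₀ (mul_ne_zero ?_ ?_)
  · exact prod_ne_zero_iff.mpr fun t ht => sub_ne_zero.mpr (hy t (Finset.mem_range.mp ht)).symm
  · exact prod_ne_zero_iff.mpr fun s hs => sub_ne_zero.mpr (hx s (Finset.mem_range.mp hs)).symm

theorem newtonPoly_mem_span {S : Set (ℕ × ℕ)} (hS : IsLowerSet S) {i j : ℕ}
    (hij : (i, j) ∈ S) :
    newtonPoly y xc i j ∈ span F (range fun d : S => X 0 ^ d.1.1 * X 1 ^ d.1.2) := by
  rw [newtonPoly, mul_assoc, ← smul_eq_C_mul, mul_comm (∏ t ∈ range j, (X 1 - C (y t)))]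
  exact smul_mem _ _ <| mul_mem_span_X_zero_pow_mul_X_one_pow hS hij
    (prod_X_sub_C_mem_span_X_pow (0 : Fin 2) (xc j) i)
    (prod_X_sub_C_mem_span_X_pow (1 : Fin 2) y j)

theorem linearIndependent_eval_newtonPoly {S : Set (ℕ × ℕ)} [Finite S]
    (hy : ∀ q ∈ S, ∀ t < q.2, y t ≠ y q.2) (hx : ∀ q ∈ S, ∀ s < q.1, xc q.2 s ≠ xc q.2 q.1) :
    LinearIndependent F fun q q' : S =>
      eval ![xc q'.1.2 q'.1.1, y q'.1.2] (newtonPoly y xc q.1.1 q.1.2) := by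
  classical
  have := Fintype.ofFinite S
  refine Matrix.BlockTriangular.linearIndependent_rows (b := fun q : S => toLex (q.1.2, q.1.1))
    (fun q q' h => eval_newtonPoly_of_toLex_lt y xc h)
    (fun q q' h => Subtype.ext (Prod.swap_injective (toLex.injective h))) fun q => ?_
  rw [eval_newtonPoly_self y xc (hy q q.2) (hx q q.2)]
  exact one_ne_zero

end Newton

end Polynomials

/-- For a generalized x-tower set `Ξ = {(x_{mn}, y_n) : (m,n) ∈ S}`, `S = L_x(m₀,…,m_ν)`, the
Newton polynomials `φ_{ij} = c_{ij} ∏_{t<j}(y−y_t) ∏_{s<i}(x−x_{sj})` are linearly independent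
over `F` and span the same space as the monomials `{x^i y^j : (i,j) ∈ S}`; in particular they
form a basis of an `|S|`-dimensional space in which the Lagrange interpolation problem on `Ξ`
has a unique solution. Here `xc n i` denotes the abscissa `x_{in}`. -/
theorem stmt_14 {F : Type*} [Field F]
    (ν : ℕ) (m : ℕ → ℕ) (y : ℕ → F) (xc : ℕ → ℕ → F)
    (hm : ∀ j, j < ν → m (j + 1) < m j)
    (hy : ∀ j j', j ≤ ν → j' ≤ ν → y j = y j' → j = j')
    (hxc : ∀ n, n ≤ ν → ∀ i i', i ≤ m n → i' ≤ m n → xc n i = xc n i' → i = i')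
    (Φ : ℕ → ℕ → MvPolynomial (Fin 2) F)
    (hΦ : ∀ i j, Φ i j =
      C (((∏ t ∈ Finset.range j, (y j - y t)) * ∏ s ∈ Finset.range i, (xc j i - xc j s))⁻¹) *
        (∏ t ∈ Finset.range j, (X 1 - C (y t))) * ∏ s ∈ Finset.range i, (X 0 - C (xc j s))) :
    LinearIndependent F
        (fun q : {q : ℕ × ℕ // q.2 ≤ ν ∧ q.1 ≤ m q.2} => Φ q.1.1 q.1.2) ∧
      Submodule.span F
          (Set.range (fun q : {q : ℕ × ℕ // q.2 ≤ ν ∧ q.1 ≤ m q.2} => Φ q.1.1 q.1.2)) =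
        Submodule.span F
          (Set.range (fun q : {q : ℕ × ℕ // q.2 ≤ ν ∧ q.1 ≤ m q.2} =>
            (X 0 ^ q.1.1 * X 1 ^ q.1.2 : MvPolynomial (Fin 2) F))) ∧
      ∀ vals : {q : ℕ × ℕ // q.2 ≤ ν ∧ q.1 ≤ m q.2} → F,
        ∃! p : MvPolynomial (Fin 2) F,
          p ∈ Submodule.span F
              (Set.range (fun q : {q : ℕ × ℕ // q.2 ≤ ν ∧ q.1 ≤ m q.2} => Φ q.1.1 q.1.2)) ∧
            ∀ q : {q : ℕ × ℕ // q.2 ≤ ν ∧ q.1 ≤ m q.2},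
              MvPolynomial.eval ![xc q.1.2 q.1.1, y q.1.2] p = vals q := by
  obtain rfl : Φ = newtonPoly y xc := funext₂ hΦ
  have : Finite (xTowerSet ν m) := (xTowerSet_finite ν m).to_subtype
  have hev : LinearIndependent F fun q q' : xTowerSet ν m =>
      eval ![xc q'.1.2 q'.1.1, y q'.1.2] (newtonPoly y xc q.1.1 q.1.2) :=
    linearIndependent_eval_newtonPoly y xc
      (fun q hq t ht h => ht.ne (hy t q.2 (ht.le.trans hq.1) hq.1 h))
      (fun q hq s hs h => hs.ne (hxc q.2 hq.1 s q.1 (hs.le.trans hq.2) hq.2 h))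
  let ℓ (q : xTowerSet ν m) : MvPolynomial (Fin 2) F →ₗ[F] F :=
    (aeval ![xc q.1.2 q.1.1, y q.1.2]).toLinearMap
  have hli := hev.of_comp (LinearMap.pi ℓ)
  have hS := isLowerSet_xTowerSet (strictAntiOn_Iic_of_succ_lt hm).antitoneOn
  have hspan : span F (range fun q : xTowerSet ν m => newtonPoly y xc q.1.1 q.1.2) =
      span F (range fun q : xTowerSet ν m => X 0 ^ q.1.1 * X 1 ^ q.1.2) :=
    span_range_eq_of_le_of_linearIndependent hli
      (linearIndependent_X_zero_pow_mul_X_one_pow.comp _ Subtype.val_injective)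
      (span_le.mpr <| range_subset_iff.mpr fun q => newtonPoly_mem_span y xc hS q.2)
  exact ⟨hli, hspan, existsUnique_mem_span_forall_apply_eq (ℓ := ℓ) hev⟩
end

section
/- Let Ξ ⊂ F² be a generalized x-tower set with index lower set S = L_x(m₀,…,m_ν), m₀ > ⋯ > m_ν ≥ 0. Then the evaluation map F[x,y] → F^{|Ξ|} restricted to span{x^i y^j : (i,j) ∈ S} is a linear isomorphism; i.e., the monomials {x^i y^j : (i,j) ∈ S} form an interpolation basis: for any values f_{mn} ∈ F there is a unique p ∈ span{x^i y^j : (i,j) ∈ S} with p(u_{mn}) = f_{mn} for all (m,n) ∈ S. -/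
/-!
Write a polynomial in the span as `p = ∑ⱼ pⱼ(x) yʲ ∈ F[x][y]` with `deg pⱼ ≤ mⱼ`. Since `m` is
decreasing, `p(x, y₀)` has degree at most `m₀` and vanishes at the `m₀ + 1` distinct nodes of row
`0`, so it is zero and `y - y₀` divides `p`. The quotient has the degree profile `m₁, m₂, …` and
vanishes on the remaining rows because `yₙ ≠ y₀` there, so induction on the number of rows gives
`p = 0`. Thus the square evaluation system on the monomials is injective, hence bijective.
-/

namespace Polynomial

theorem eq_zero_of_natDegree_le_of_eval_eq_zero {F : Type*} [Field F] {p : F[X]} {M : ℕ}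
    {x : ℕ → F} (hx : Set.InjOn x (Set.Iic M)) (hdeg : p.natDegree ≤ M)
    (h : ∀ i ≤ M, p.eval (x i) = 0) : p = 0 :=
  eq_zero_of_natDegree_lt_card_of_eval_eq_zero p hx.injective (fun i => h i i.2)
    (by simpa using Nat.lt_succ_of_le hdeg)

variable {R : Type*} [CommRing R] {ν : ℕ} {m : ℕ → ℕ}

theorem natDegree_eval_C_le_of_antitoneOn {p : R[X][X]} (hm : AntitoneOn m (Set.Iic ν))
    (hν : p.natDegree ≤ ν) (hdeg : ∀ j, (p.coeff j).natDegree ≤ m j) (c : R) :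
    (p.eval (C c)).natDegree ≤ m 0 := by
  rw [eval_eq_sum_range]
  refine natDegree_sum_le_of_forall_le _ _ fun j hj => ?_
  have hj : j ≤ ν := (Nat.le_of_lt_succ (Finset.mem_range.mp hj)).trans hν
  rw [← C_pow]
  exact (natDegree_mul_C_le _ _).trans <| (hdeg j).trans <| hm ν.zero_le hj j.zero_le

theorem natDegree_coeff_divByMonic_X_sub_C_le {p : R[X][X]} (hm : AntitoneOn m (Set.Iic ν))
    (hν : p.natDegree ≤ ν) (hdeg : ∀ j, (p.coeff j).natDegree ≤ m j) (c : R) (j : ℕ) :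
    ((p /ₘ (X - C (C c))).coeff j).natDegree ≤ m (j + 1) := by
  rw [coeff_divByMonic_X_sub_C]
  refine natDegree_sum_le_of_forall_le _ _ fun i hi => ?_
  obtain ⟨hji, hi⟩ := Finset.mem_Icc.mp hi
  rw [← C_pow]
  exact (natDegree_C_mul_le _ _).trans <| (hdeg i).trans <|
    hm (hji.trans (hi.trans hν)) (hi.trans hν) hji

theorem isRoot_C_of_evalEval_eq_zero {F : Type*} [Field F] {p : F[X][X]}
    (hm : AntitoneOn m (Set.Iic ν)) (hν : p.natDegree ≤ ν)
    (hdeg : ∀ j, (p.coeff j).natDegree ≤ m j) {x : ℕ → F} (hx : Set.InjOn x (Set.Iic (m 0)))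
    {c : F} (h : ∀ i ≤ m 0, p.evalEval (x i) c = 0) : p.IsRoot (C c) :=
  eq_zero_of_natDegree_le_of_eval_eq_zero hx (natDegree_eval_C_le_of_antitoneOn hm hν hdeg c) h

theorem eq_zero_of_evalEval_eq_zero_of_tower {F : Type*} [Field F] {y : ℕ → F}
    {x : ℕ → ℕ → F} (hm : AntitoneOn m (Set.Iic ν)) (hy : Set.InjOn y (Set.Iic ν))
    (hx : ∀ n ≤ ν, Set.InjOn (x n) (Set.Iic (m n))) {p : F[X][X]} (hν : p.natDegree ≤ ν)
    (hdeg : ∀ j, (p.coeff j).natDegree ≤ m j)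
    (h : ∀ n ≤ ν, ∀ i ≤ m n, p.evalEval (x n i) (y n) = 0) : p = 0 := by
  induction ν generalizing m y x p with
  | zero =>
    have hroot := isRoot_C_of_evalEval_eq_zero hm hν hdeg (hx 0 le_rfl) (h 0 le_rfl)
    rw [eq_C_of_natDegree_le_zero hν] at hroot ⊢
    simpa using hroot
  | succ ν ih =>
    have hroot := isRoot_C_of_evalEval_eq_zero hm hν hdeg (hx 0 ν.succ.zero_le) (h 0 ν.succ.zero_le)
    have hquot : p /ₘ (X - C (C (y 0))) = 0 := by
      refine ih (m := fun j => m (j + 1)) (y := fun n => y (n + 1)) (x := fun n => x (n + 1))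
        (fun a ha b hb hab => hm (Nat.succ_le_succ ha) (Nat.succ_le_succ hb) (Nat.succ_le_succ hab))
        (fun a ha b hb hab =>
          Nat.succ_injective (hy (Nat.succ_le_succ ha) (Nat.succ_le_succ hb) hab))
        (fun n hn => hx (n + 1) (Nat.succ_le_succ hn)) ?_
        (natDegree_coeff_divByMonic_X_sub_C_le hm hν hdeg _) (fun n hn i hi => ?_)
      · rw [natDegree_divByMonic _ (monic_X_sub_C _), natDegree_X_sub_C]
        omega
      · have hrow := h (n + 1) (Nat.succ_le_succ hn) i hi
        rw [← mul_divByMonic_eq_iff_isRoot.mpr hroot, evalEval_mul] at hrow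
        refine (mul_eq_zero.mp hrow).resolve_left ?_
        have hy0 : y (n + 1) ≠ y 0 := fun h0 =>
          n.succ_ne_zero (hy (Nat.succ_le_succ hn) ν.succ.zero_le h0)
        simpa [sub_eq_zero] using hy0
    rw [← mul_divByMonic_eq_iff_isRoot.mpr hroot, hquot, mul_zero]

end Polynomial

theorem existsUnique_mem_span_forall_apply_eq_s15 {K V ι : Type*} [Field K] [AddCommGroup V]
    [Module K V] [Fintype ι] (b : ι → V) (φ : ι → V →ₗ[K] K)
    (h : ∀ c : ι → K, (∀ i, φ i (∑ j, c j • b j) = 0) → c = 0) (vals : ι → K) :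
    ∃! v, v ∈ Submodule.span K (Set.range b) ∧ ∀ i, φ i v = vals i := by
  set A := LinearMap.pi φ ∘ₗ Fintype.linearCombination K b
  have hA : Function.Injective A :=
    (injective_iff_map_eq_zero A).mpr fun c hc => h c (congrFun hc)
  obtain ⟨c, hc⟩ := LinearMap.injective_iff_surjective.mp hA vals
  refine ⟨Fintype.linearCombination K b c, ⟨?_, congrFun hc⟩, ?_⟩
  · exact Fintype.range_linearCombination K b ▸ LinearMap.mem_range_self _ c
  · rintro v ⟨hv, hvals⟩
    rw [← Fintype.range_linearCombination] at hv
    obtain ⟨c', rfl⟩ := hv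
    rw [hA (hc.trans (funext hvals).symm)]

/-- The index set `S = L_x(m₀,…,m_ν)`: `(i, j)` indexes both the monomial `x^i y^j` and the node
`u_{ij} = (x_{ij}, y_j)`, written `(x j i, y j)` below. -/
abbrev TowerIndex (ν : ℕ) (m : ℕ → ℕ) : Type := {q : ℕ × ℕ // q.2 ≤ ν ∧ q.1 ≤ m q.2}

instance (ν : ℕ) (m : ℕ → ℕ) : Fintype (TowerIndex ν m) :=
  Fintype.subtype ((Finset.Iic ((Finset.range (ν + 1)).sup m, ν)).filter fun q => q.1 ≤ m q.2)
    fun q => by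
      simp only [Finset.mem_filter, Finset.mem_Iic, Prod.le_def]
      exact ⟨fun ⟨⟨_, h2⟩, h⟩ => ⟨h2, h⟩, fun ⟨h2, h⟩ =>
        ⟨⟨h.trans (Finset.le_sup (Finset.mem_range.mpr (Nat.lt_succ_of_le h2))), h2⟩, h⟩⟩

open Polynomial in
theorem eq_zero_of_sum_mul_pow_eq_zero_of_tower {F : Type*} [Field F] {ν : ℕ} {m : ℕ → ℕ}
    {y : ℕ → F} {x : ℕ → ℕ → F} (hm : AntitoneOn m (Set.Iic ν)) (hy : Set.InjOn y (Set.Iic ν))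
    (hx : ∀ n ≤ ν, Set.InjOn (x n) (Set.Iic (m n))) (c : TowerIndex ν m → F)
    (h : ∀ q : TowerIndex ν m,
      ∑ q', c q' * (x q.1.2 q.1.1 ^ q'.1.1 * y q.1.2 ^ q'.1.2) = 0) : c = 0 := by
  set P : F[X][X] := ∑ q, monomial q.1.2 (monomial q.1.1 (c q))
  have hP : P = 0 := by
    refine eq_zero_of_evalEval_eq_zero_of_tower hm hy hx ?_ ?_ ?_
    · exact natDegree_sum_le_of_forall_le _ _ fun q _ =>
        (natDegree_monomial_le _).trans q.2.1
    · intro j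
      rw [finsetSum_coeff]
      refine natDegree_sum_le_of_forall_le _ _ fun q _ => ?_
      rw [coeff_monomial]
      split_ifs with hj
      · exact hj ▸ (natDegree_monomial_le _).trans q.2.2
      · exact natDegree_zero.trans_le (Nat.zero_le _)
    · intro n hn i hi
      simpa [P, evalEval, eval_finsetSum, mul_comm, mul_assoc, mul_left_comm]
        using h ⟨(i, n), hn, hi⟩
  funext q
  have hcoeff : (P.coeff q.1.2).coeff q.1.1 = c q := by
    simp only [P, finsetSum_coeff, coeff_monomial]
    rw [Finset.sum_eq_single q]
    · simp
    · intro q' _ hq'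
      split_ifs with h2 <;> simp only [coeff_monomial, coeff_zero]
      exact if_neg fun h1 => hq' (Subtype.ext (Prod.ext h1 h2))
    · simp
  rw [Pi.zero_apply, ← hcoeff, hP, coeff_zero, coeff_zero]

open MvPolynomial

/-- For a generalized x-tower set `Ξ = {u_{mn} = (x_{mn}, y_n) : (m,n) ∈ S}` with
`S = L_x(m₀,…,m_ν)`, `m₀ > ⋯ > m_ν ≥ 0`, the monomials `{x^i y^j : (i,j) ∈ S}` form an
interpolation basis: for any prescribed values there is a unique polynomial in their span
attaining those values at the points of `Ξ`. Here `xc n i` denotes the abscissa `x_{in}`. -/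
theorem stmt_15 {F : Type*} [Field F]
    (ν : ℕ) (m : ℕ → ℕ) (y : ℕ → F) (xc : ℕ → ℕ → F)
    (hm : ∀ j, j < ν → m (j + 1) < m j)
    (hy : ∀ j j', j ≤ ν → j' ≤ ν → y j = y j' → j = j')
    (hxc : ∀ n, n ≤ ν → ∀ i i', i ≤ m n → i' ≤ m n → xc n i = xc n i' → i = i') :
    ∀ vals : {q : ℕ × ℕ // q.2 ≤ ν ∧ q.1 ≤ m q.2} → F,
      ∃! p : MvPolynomial (Fin 2) F,
        p ∈ Submodule.span F
            (Set.range (fun q : {q : ℕ × ℕ // q.2 ≤ ν ∧ q.1 ≤ m q.2} =>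
              (X 0 ^ q.1.1 * X 1 ^ q.1.2 : MvPolynomial (Fin 2) F))) ∧
          ∀ q : {q : ℕ × ℕ // q.2 ≤ ν ∧ q.1 ≤ m q.2},
            MvPolynomial.eval ![xc q.1.2 q.1.1, y q.1.2] p = vals q := by
  have hanti : AntitoneOn m (Set.Iic ν) :=
    (strictAntiOn_of_succ_lt Set.ordConnected_Iic fun j _ _ hj =>
      hm j (Nat.succ_le_iff.mp hj)).antitoneOn
  refine existsUnique_mem_span_forall_apply_eq_s15 (ι := TowerIndex ν m) _
    (fun q => (aeval ![xc q.1.2 q.1.1, y q.1.2]).toLinearMap)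
    (fun c hc => eq_zero_of_sum_mul_pow_eq_zero_of_tower hanti (fun j hj j' hj' => hy j j' hj hj')
      (fun n hn i hi i' hi' => hxc n hn i i' hi hi') c fun q => ?_)
  simpa [mul_assoc] using hc q
end

section
/- Let y₀,…,y_ν ∈ F be distinct and, for each j, let x_{0j},…,x_{m_j j} ∈ F be distinct, with m₀ > ⋯ > m_ν ≥ 0. The evaluation matrix of the Newton polynomials φ_{ij} at the points u_{mn} = (x_{mn},y_n), with rows and columns both ordered by the invlex order on the indices (i,j) and (m,n), is upper unitriangular (ones on the diagonal, zeros below). -/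
/-- Let `y₀,…,y_ν` be distinct and, for each `j ≤ ν`, let `x_{0j},…,x_{m_j j}` be distinct,
with `m₀ > ⋯ > m_ν ≥ 0`. The evaluation matrix `M` of the Newton polynomials `φ_{ij}` at the
points `u_{mn} = (x_{mn}, y_n)`, with rows and columns indexed by `S = L_x(m₀,…,m_ν)` and both
ordered by the invlex order (`(i,j) ≺ (m,n)` iff `j < n`, or `j = n` and `i < m`), is upper
unitriangular: ones on the diagonal, and zeros strictly below it. Here `xc n i = x_{in}`. -/
theorem stmt_16 {F : Type*} [Field F]
    (ν : ℕ) (m : ℕ → ℕ) (y : ℕ → F) (xc : ℕ → ℕ → F)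
    (hm : ∀ j, j < ν → m (j + 1) < m j)
    (hy : ∀ j j', j ≤ ν → j' ≤ ν → y j = y j' → j = j')
    (hxc : ∀ n, n ≤ ν → ∀ i i', i ≤ m n → i' ≤ m n → xc n i = xc n i' → i = i')
    (φ : ℕ → ℕ → F × F → F)
    (hφ : ∀ i j, φ i j = fun p =>
      (((∏ t ∈ Finset.range j, (y j - y t)) * ∏ s ∈ Finset.range i, (xc j i - xc j s))⁻¹) *
        ((∏ t ∈ Finset.range j, (p.2 - y t)) * ∏ s ∈ Finset.range i, (p.1 - xc j s)))
    (M : {q : ℕ × ℕ // q.2 ≤ ν ∧ q.1 ≤ m q.2} → {q : ℕ × ℕ // q.2 ≤ ν ∧ q.1 ≤ m q.2} → F)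
    (hM : ∀ q r, M q r = φ q.1.1 q.1.2 (xc r.1.2 r.1.1, y r.1.2)) :
    (∀ q, M q q = 1) ∧
      ∀ q r, (r.1.2 < q.1.2 ∨ (r.1.2 = q.1.2 ∧ r.1.1 < q.1.1)) → M q r = 0 := by
  constructor
  · rintro ⟨⟨i, j⟩, hj, hi⟩
    rw [hM, hφ]
    simp only
    have h1 : (∏ t ∈ Finset.range j, (y j - y t)) ≠ 0 := by
      rw [Finset.prod_ne_zero_iff]
      intro t ht
      rw [Finset.mem_range] at ht
      refine sub_ne_zero.mpr fun h => ?_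
      have := hy j t hj (le_of_lt (lt_of_lt_of_le ht hj)) h
      omega
    have h2 : (∏ s ∈ Finset.range i, (xc j i - xc j s)) ≠ 0 := by
      rw [Finset.prod_ne_zero_iff]
      intro s hs
      rw [Finset.mem_range] at hs
      refine sub_ne_zero.mpr fun h => ?_
      have := hxc j hj i s hi (le_of_lt (lt_of_lt_of_le hs hi)) h
      omega
    exact inv_mul_cancel₀ (mul_ne_zero h1 h2)
  · rintro ⟨⟨i, j⟩, hj, hi⟩ ⟨⟨i', n⟩, hn, hi'⟩ hlt
    rw [hM, hφ]
    simp only at hlt ⊢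
    rcases hlt with h | ⟨h1, h2⟩
    · have : (∏ t ∈ Finset.range j, (y n - y t)) = 0 :=
        Finset.prod_eq_zero (Finset.mem_range.mpr h) (by ring)
      rw [this]; ring
    · subst h1
      have : (∏ s ∈ Finset.range i, (xc n i' - xc n s)) = 0 :=
        Finset.prod_eq_zero (Finset.mem_range.mpr h2) (by ring)
      rw [this]; ring
end

section
/- Let I ⊆ F[x,y] be an ideal, y₀ ∈ F, and suppose I is generated by g₁,…,g_k where g₁ = (x−x₀)⋯(x−x_m) for distinct x₀,…,x_m ∈ F and g₂,…,g_k ∈ ⟨y − y₀⟩. Then I ∩ ⟨y − y₀⟩ = ⟨g₂,…,g_k⟩ + ⟨g₁·(y−y₀)⟩, and consequently I : ⟨y − y₀⟩ ⊇ ⟨g₂/(y−y₀), …, g_k/(y−y₀), g₁⟩. -/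
/-!
`p = y - y₀` is prime in `F[x,y]` and does not divide `g₀ = ∏ (x - xᵢ)`, a nonzero polynomial in
`x` alone. Splitting `I = ⟨g₀⟩ + J`, where `J ≤ ⟨p⟩` is generated by the other `gᵢ`, the modular
law gives `I ∩ ⟨p⟩ = J + ⟨g₀⟩ ∩ ⟨p⟩`, and `⟨g₀⟩ ∩ ⟨p⟩ = ⟨g₀ p⟩` because `p ∣ r g₀` forces `p ∣ r`.
The quotient inclusion is checked on generators: `qᵢ p = gᵢ` and `g₀ p` lie in `I`.
-/

open MvPolynomial

namespace Ideal

variable {R : Type*} [CommRing R]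

theorem span_singleton_inf_span_singleton_of_prime {p a : R} (hp : Prime p) (ha : ¬ p ∣ a) :
    span {a} ⊓ span {p} = span {a * p} := by
  refine le_antisymm ?_ ?_
  · rintro f ⟨hfa, hfp⟩
    obtain ⟨r, rfl⟩ := mem_span_singleton'.1 hfa
    obtain ⟨s, rfl⟩ := (hp.dvd_mul.1 (mem_span_singleton.1 hfp)).resolve_right ha
    exact mem_span_singleton.2 ⟨s, by ring⟩
  · rw [span_singleton_le_iff_mem]
    exact ⟨mul_mem_right _ _ (mem_span_singleton_self a),
      mul_mem_left _ _ (mem_span_singleton_self p)⟩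

theorem span_singleton_sup_inf_span_singleton_of_prime {p a : R} {J : Ideal R} (hp : Prime p)
    (ha : ¬ p ∣ a) (hJ : J ≤ span {p}) :
    (span {a} ⊔ J) ⊓ span {p} = J ⊔ span {a * p} := by
  rw [sup_comm, sup_inf_assoc_of_le _ hJ, span_singleton_inf_span_singleton_of_prime hp ha]

theorem span_le_colon_span_singleton_iff {I : Ideal R} {S : Set R} {p : R} :
    span S ≤ I.colon (span {p}) ↔ ∀ s ∈ S, s * p ∈ I := by
  simp only [span_le, Set.subset_def, SetLike.mem_coe, mem_colon_span_singleton]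

theorem span_range_fin_succ {k : ℕ} (g : Fin (k + 1) → R) :
    span (Set.range g) = span {g 0} ⊔ span {h | ∃ i, i ≠ 0 ∧ h = g i} := by
  rw [← span_union]
  congr 1
  ext h
  constructor
  · rintro ⟨i, rfl⟩
    by_cases hi : i = 0
    · exact Or.inl (by rw [hi]; rfl)
    · exact Or.inr ⟨i, hi, rfl⟩
  · rintro (rfl | ⟨i, -, rfl⟩)
    exacts [⟨0, rfl⟩, ⟨i, rfl⟩]

end Ideal

namespace MvPolynomial

variable {σ R : Type*} [CommRing R]

theorem prime_X_sub_C [IsDomain R] (i : σ) (a : R) : Prime (X i - C a : MvPolynomial σ R) := by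
  classical
  let e : MvPolynomial σ R ≃* Polynomial (MvPolynomial {j // j ≠ i} R) :=
    ((renameEquiv R (Equiv.optionSubtypeNe i).symm).trans (optionEquivLeft R _)).toMulEquiv
  have he : e (X i - C a) = Polynomial.X - Polynomial.C (C a) := by
    simp [e, optionEquivLeft_X_none, optionEquivLeft_C]
  rw [← MulEquiv.prime_iff e, he]
  exact Polynomial.prime_X_sub_C _

theorem X_sub_C_not_dvd_prod_X_sub_C [Nontrivial R] {ι : Type*} {i j : σ} (hij : i ≠ j) (b : R)
    (s : Finset ι) (x : ι → R) : ¬ (X j - C b : MvPolynomial σ R) ∣ ∏ l ∈ s, (X i - C (x l)) := by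
  classical
  intro h
  let φ : MvPolynomial σ R →ₐ[R] Polynomial R :=
    aeval fun t => if t = j then Polynomial.C b else Polynomial.X
  have hdvd := map_dvd φ h
  simp only [φ, map_sub, map_prod, aeval_X, aeval_C, if_pos, if_neg hij,
    Polynomial.algebraMap_eq, sub_self, zero_dvd_iff] at hdvd
  exact (Polynomial.monic_prod_of_monic _ _ fun l _ => Polynomial.monic_X_sub_C (x l)).ne_zero hdvd

end MvPolynomial

theorem stmt_17_general {F : Type*} [Field F]
    (I : Ideal (MvPolynomial (Fin 2) F)) (y0 : F) (k m : ℕ) (x : ℕ → F)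
    (g q : Fin (k + 1) → MvPolynomial (Fin 2) F)
    (hI : I = Ideal.span (Set.range g))
    (hg0 : g 0 = ∏ i ∈ Finset.range (m + 1), (X 0 - C (x i)))
    (hq : ∀ i, i ≠ 0 → g i = (X 1 - C y0) * q i) :
    I ⊓ Ideal.span {X 1 - C y0} =
        Ideal.span ({h | ∃ i, i ≠ 0 ∧ h = g i} ∪ {g 0 * (X 1 - C y0)}) ∧
      Ideal.span ({h | ∃ i, i ≠ 0 ∧ h = q i} ∪ {g 0}) ≤
        I.colon ((Ideal.span {X 1 - C y0} : Ideal (MvPolynomial (Fin 2) F)) :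
          Set (MvPolynomial (Fin 2) F)) := by
  have hg0p : ¬ (X 1 - C y0) ∣ g 0 :=
    hg0 ▸ X_sub_C_not_dvd_prod_X_sub_C (by decide) y0 _ x
  have hJ : Ideal.span {h | ∃ i, i ≠ 0 ∧ h = g i} ≤ Ideal.span {X 1 - C y0} := by
    rw [Ideal.span_le]
    rintro _ ⟨i, hi, rfl⟩
    exact Ideal.mem_span_singleton.2 ⟨q i, hq i hi⟩
  have hgI : ∀ i, g i ∈ I := fun i => hI ▸ Ideal.subset_span ⟨i, rfl⟩
  refine ⟨?_, ?_⟩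
  · rw [hI, Ideal.span_range_fin_succ, Ideal.span_union]
    exact Ideal.span_singleton_sup_inf_span_singleton_of_prime (prime_X_sub_C 1 y0) hg0p hJ
  · rw [Ideal.span_le_colon_span_singleton_iff]
    rintro _ (⟨i, hi, rfl⟩ | rfl)
    · rw [mul_comm, ← hq i hi]
      exact hgI i
    · exact Ideal.mul_mem_right _ _ (hgI 0)

/-- Let `I ⊆ F[x,y]` be generated by `g₀,…,g_k` where `g₀ = (x−x₀)⋯(x−x_m)` for distinct
`x₀,…,x_m` and each `gᵢ` (`i ≠ 0`) lies in `⟨y−y₀⟩`, say `gᵢ = (y−y₀)·qᵢ`. Then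
`I ∩ ⟨y−y₀⟩ = ⟨g₁,…,g_k⟩ + ⟨g₀·(y−y₀)⟩`, and consequently
`I : ⟨y−y₀⟩ ⊇ ⟨q₁,…,q_k, g₀⟩`. -/
theorem stmt_17 {F : Type*} [Field F]
    (I : Ideal (MvPolynomial (Fin 2) F)) (y0 : F) (k m : ℕ) (x : ℕ → F)
    (hx : ∀ i i', i ≤ m → i' ≤ m → x i = x i' → i = i')
    (g q : Fin (k + 1) → MvPolynomial (Fin 2) F)
    (hI : I = Ideal.span (Set.range g))
    (hg0 : g 0 = ∏ i ∈ Finset.range (m + 1), (X 0 - C (x i)))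
    (hq : ∀ i, i ≠ 0 → g i = (X 1 - C y0) * q i) :
    I ⊓ Ideal.span {X 1 - C y0} =
        Ideal.span ({h | ∃ i, i ≠ 0 ∧ h = g i} ∪ {g 0 * (X 1 - C y0)}) ∧
      Ideal.span ({h | ∃ i, i ≠ 0 ∧ h = q i} ∪ {g 0}) ≤
        I.colon ((Ideal.span {X 1 - C y0} : Ideal (MvPolynomial (Fin 2) F)) :
          Set (MvPolynomial (Fin 2) F)) :=
  stmt_17_general I y0 k m x g q hI hg0 hq
end
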